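/- Let N be a finite set of n players with n ≥ 2, let x_1, …, x_n and α be vectors in a real inner product space, and define U₂(S) = 2·⟨(1/|S|)·Σ_{i∈S} x_i, α⟩ for nonempty S ⊆ N and U₂(∅) = 0. Then for every j ∈ N, φ_j(U₂) = 2·[ ((Σ_{k=1}^{n−1} 1/k)/(n−1))·⟨x_j, α⟩ − ((Σ_{k=1}^n 1/k − 1)/(n(n−1)))·⟨Σ_{i∈N} x_i, α⟩ ]. -/

import Mathlib

/-!
Write `a i = ⟪x i, α⟫`, so that `U₂ S = 2 · 𝔼 i ∈ S, a i`. Adding `j ∉ S` to a coalition of size `m`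
moves its mean by `(a j - 𝔼 i ∈ S, a i) / (m + 1)`, and for `m ≥ 1` the means of the `m`-subsets of
`N ∖ {j}` average to the mean of `N ∖ {j}`. The Shapley weights thus turn each coalition size `k`
into a term `2 (a j - 𝔼 i ∈ N ∖ {j}, a i) / k` (just `2 a j` for `k = 1`), and summing over `k`
produces the harmonic numbers.
-/

open Finset RealInnerProductSpace
open scoped BigOperators

namespace Finset

theorem sum_Icc_one_eq_sum_range {M : Type*} [AddCommMonoid M] (f : ℕ → M) (n : ℕ) :
    ∑ k ∈ Icc 1 n, f k = ∑ m ∈ range n, f (m + 1) := by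
  rw [← Ico_add_one_right_eq_Icc, sum_Ico_eq_sum_range, Nat.add_sub_cancel]
  simp only [add_comm]

variable {ι : Type*} [DecidableEq ι]

theorem sum_powersetCard_succ_sum {M : Type*} [AddCommMonoid M] (t : Finset ι) (m : ℕ)
    (f : ι → M) :
    ∑ S ∈ t.powersetCard (m + 1), ∑ i ∈ S, f i = (#t - 1).choose m • ∑ i ∈ t, f i := by
  rw [sum_comm' (t' := t) (s' := fun i => {S ∈ t.powersetCard (m + 1) | {i} ⊆ S})
    (f := fun _ i => f i)]
  · rw [smul_sum]
    refine sum_congr rfl fun i hi => ?_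
    rw [sum_const, card_filter_powersetCard_subset _ _ _ (singleton_subset_iff.2 hi) (by simp)]
    simp
  · intro S i
    simp only [mem_filter, mem_powersetCard, singleton_subset_iff]
    constructor
    · rintro ⟨⟨hSt, hS⟩, hiS⟩
      exact ⟨⟨⟨hSt, hS⟩, hiS⟩, hSt hiS⟩
    · rintro ⟨⟨⟨hSt, hS⟩, hiS⟩, -⟩
      exact ⟨⟨hSt, hS⟩, hiS⟩

variable {K : Type*} [Field K] [CharZero K]

theorem sum_powersetCard_succ_expect (t : Finset ι) (m : ℕ) (f : ι → K) :
    ∑ S ∈ t.powersetCard (m + 1), 𝔼 i ∈ S, f i = (#t).choose (m + 1) * 𝔼 i ∈ t, f i := by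
  have hcard : ∀ S ∈ t.powersetCard (m + 1), 𝔼 i ∈ S, f i = (∑ i ∈ S, f i) / (m + 1 : ℕ) :=
    fun S hS => by rw [expect_eq_sum_div_card, (mem_powersetCard.1 hS).2]
  rw [sum_congr rfl hcard, ← sum_div, sum_powersetCard_succ_sum, expect_eq_sum_div_card,
    nsmul_eq_mul]
  cases hq : #t with
  | zero => simp [card_eq_zero.1 hq]
  | succ q =>
    have hchoose : ((q + 1 : ℕ) : K) * q.choose m = (q + 1).choose (m + 1) * (m + 1 : ℕ) := by
      exact_mod_cast Nat.add_one_mul_choose_eq q m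
    rw [Nat.add_sub_cancel]
    field_simp
    linear_combination (∑ i ∈ t, f i) * hchoose

theorem expect_insert_sub_expect {S : Finset ι} {j : ι} (hj : j ∉ S) (f : ι → K) :
    𝔼 i ∈ insert j S, f i - 𝔼 i ∈ S, f i = (f j - 𝔼 i ∈ S, f i) / (#S + 1) := by
  rcases S.eq_empty_or_nonempty with rfl | hS
  · simp
  rw [expect_eq_sum_div_card, expect_eq_sum_div_card, sum_insert hj, card_insert_of_notMem hj]
  have : (#S : K) ≠ 0 := by exact_mod_cast hS.card_ne_zero
  push_cast
  field_simp
  ring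

theorem inv_choose_mul_sum_powersetCard_expect_insert_sub {t : Finset ι} {j : ι} (hj : j ∉ t)
    {m : ℕ} (hm : m + 1 ≤ #t) (f : ι → K) :
    ((#t).choose (m + 1) : K)⁻¹ *
        ∑ S ∈ t.powersetCard (m + 1), (𝔼 i ∈ insert j S, f i - 𝔼 i ∈ S, f i) =
      (f j - 𝔼 i ∈ t, f i) / (m + 2) := by
  have hmarginal : ∀ S ∈ t.powersetCard (m + 1),
      𝔼 i ∈ insert j S, f i - 𝔼 i ∈ S, f i = (f j - 𝔼 i ∈ S, f i) / (m + 2) := by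
    intro S hS
    obtain ⟨hSt, hcard⟩ := mem_powersetCard.1 hS
    rw [expect_insert_sub_expect (fun h => hj (hSt h)), hcard]
    push_cast
    ring
  have hchoose : ((#t).choose (m + 1) : K) ≠ 0 := by exact_mod_cast (Nat.choose_pos hm).ne'
  rw [sum_congr rfl hmarginal, ← sum_div, sum_sub_distrib, sum_const, card_powersetCard,
    nsmul_eq_mul, sum_powersetCard_succ_expect]
  field_simp

theorem sum_Icc_inv_choose_mul_sum_expect_insert_sub {t : Finset ι} {j : ι} (hj : j ∉ t)
    (f : ι → K) :
    ∑ k ∈ Icc 1 (#t + 1), ((#t).choose (k - 1) : K)⁻¹ *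
        ∑ S ∈ t.powerset.filter (fun S => #S = k - 1),
          (𝔼 i ∈ insert j S, f i - 𝔼 i ∈ S, f i) =
      f j + (f j - 𝔼 i ∈ t, f i) * ∑ m ∈ range #t, 1 / ((m : K) + 2) := by
  have hsize : ∀ m ∈ range #t, ((#t).choose (m + 1) : K)⁻¹ *
      ∑ S ∈ t.powersetCard (m + 1), (𝔼 i ∈ insert j S, f i - 𝔼 i ∈ S, f i) =
        (f j - 𝔼 i ∈ t, f i) * (1 / (m + 2)) := fun m hm => by
    rw [inv_choose_mul_sum_powersetCard_expect_insert_sub hj (mem_range.1 hm) f, mul_one_div]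
  rw [sum_Icc_one_eq_sum_range, sum_range_succ']
  simp only [Nat.add_sub_cancel, ← powersetCard_eq_filter]
  rw [sum_congr rfl hsize, ← mul_sum]
  simp [add_comm]

end Finset

theorem sum_Icc_one_div_succ (n : ℕ) :
    ∑ k ∈ Icc 1 (n + 1), (1 : ℝ) / k = 1 + ∑ m ∈ range n, 1 / ((m : ℝ) + 2) := by
  rw [sum_Icc_one_eq_sum_range, sum_range_succ']
  push_cast
  ring_nf

theorem inner_inv_card_smul_sum {ι E : Type*} [NormedAddCommGroup E] [InnerProductSpace ℝ E]
    (S : Finset ι) (x : ι → E) (α : E) :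
    ⟪(#S : ℝ)⁻¹ • ∑ i ∈ S, x i, α⟫ = 𝔼 i ∈ S, ⟪x i, α⟫ := by
  rw [real_inner_smul_left, sum_inner, expect_eq_sum_div_card, inv_mul_eq_div]

/-- The Shapley value of player `j` under the utility
`U₂(S) = 2·⟪(1/|S|)·Σ_{i∈S} x i, α⟫` (with `U₂ ∅ = 0`), expressed via the full sum. -/
theorem shapley_U2_full_sum_form
    {ι : Type*} [Fintype ι] [DecidableEq ι]
    {E : Type*} [NormedAddCommGroup E] [InnerProductSpace ℝ E]
    (n : ℕ) (hn : 2 ≤ n) (hcard : Fintype.card ι = n)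
    (x : ι → E) (α : E) (U₂ : Finset ι → ℝ)
    (hU : ∀ S : Finset ι, S.Nonempty →
      U₂ S = 2 * ⟪(S.card : ℝ)⁻¹ • ∑ i ∈ S, x i, α⟫)
    (hU0 : U₂ ∅ = 0)
    (φ : ι → ℝ)
    (hφ : ∀ i : ι, φ i = (n : ℝ)⁻¹ * ∑ k ∈ Icc 1 n,
      ((Nat.choose (n - 1) (k - 1) : ℝ))⁻¹ *
        ∑ S ∈ (Finset.univ.erase i).powerset.filter (fun S => S.card = k - 1),
          (U₂ (insert i S) - U₂ S))
    (j : ι) :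
    φ j = 2 * (((∑ k ∈ Icc 1 (n - 1), (1 : ℝ) / k) / (n - 1)) * ⟪x j, α⟫
      - (((∑ k ∈ Icc 1 n, (1 : ℝ) / k) - 1) / (n * (n - 1))) * ⟪(∑ i, x i), α⟫) := by
  set a : ι → ℝ := fun i => ⟪x i, α⟫
  have hU₂ : ∀ S, U₂ S = 2 * 𝔼 i ∈ S, a i := by
    intro S
    rcases S.eq_empty_or_nonempty with rfl | hS
    · simpa using hU0
    · rw [hU S hS, inner_inv_card_smul_sum]
  obtain ⟨p, rfl⟩ : ∃ p, n = p + 1 + 1 := ⟨n - 2, by omega⟩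
  have ht : #(univ.erase j) = p + 1 := by simp [hcard]
  have hmean := sum_Icc_inv_choose_mul_sum_expect_insert_sub (notMem_erase j univ) a
  have htotal : ⟪∑ i, x i, α⟫ = a j + (p + 1) * 𝔼 i ∈ univ.erase j, a i := by
    rw [sum_inner, ← add_sum_erase _ _ (mem_univ j), ← card_mul_expect, ht]
    push_cast
    rfl
  rw [ht] at hmean
  rw [hφ j, Nat.add_sub_cancel]
  simp only [hU₂, ← mul_sub, ← mul_sum, mul_left_comm _ (2 : ℝ)]
  rw [hmean, htotal, eq_sub_of_add_eq' (sum_Icc_one_div_succ (p + 1)).symm,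
    sum_Icc_succ_top (by omega : 1 ≤ p + 1 + 1), show ⟪x j, α⟫ = a j from rfl]
  generalize ∑ k ∈ Icc 1 (p + 1), (1 : ℝ) / k = H
  push_cast
  field_simp
  ring
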